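/- arXiv:1206.1548 — 8 statements merged into one kernel-verified Lean document; each statement's English description precedes it below -/
import Mathlib

section
/- Let N = p^k · m^2 be an odd perfect number, where p is a prime with p ≡ k ≡ 1 (mod 4) and gcd(p, m) = 1. Then σ(p^k) ≤ (2/3) · m^2. -/
open Finset ArithmeticFunction
open scoped ArithmeticFunction.sigma

/-!
Perfection together with `σ(p^k) ≡ 1 (mod p)` gives `σ(p^k) * i = 2 m²` for some `i`, which is
odd since `σ(p^k)` is even and `m` is odd; so it suffices to rule out `i = 1`, that is
`σ(p^k) = 2 m²` together with `σ(m²) = p^k`. Write `k = 2v + 1`.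

If `v = 0`, then `p + 1 = 2 m²` and `σ(m²) = p` is prime. For a prime `q ∣ m` the factor
`σ(q^e)` of `σ(m²)` coming from the `q`-part of `m²` must equal `p`, so `p ≡ 1 (mod q)`; since
also `q ∣ p + 1`, this forces `q = 2`.

If `v > 0`, then `σ(p^k) = σ(p^v) (p^(v+1) + 1)` splits `m² = A B` into the coprime factors
`A = σ(p^v)` and `B = (p^(v+1) + 1) / 2`, both larger than `p^v`. Now `σ(A)` and `σ(B)` are
powers of `p` larger than `A` and `B`, hence at least `p^(v+1)`, and their product `p^(2v+1)`
is too small.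
-/

theorem sigma_one_prime_pow_modEq {p r : ℕ} (hp : p.Prime) (h : p ≡ 1 [MOD r]) (k : ℕ) :
    σ 1 (p ^ k) ≡ k + 1 [MOD r] := by
  rw [sigma_one_apply_prime_pow hp]
  calc ∑ i ∈ range (k + 1), p ^ i ≡ ∑ _i ∈ range (k + 1), 1 [MOD r] :=
        Nat.ModEq.sum fun i _ => by simpa using h.pow i
    _ = k + 1 := by simp

theorem sigma_one_prime_pow_modEq_one {p : ℕ} (hp : p.Prime) (k : ℕ) :
    σ 1 (p ^ k) ≡ 1 [MOD p] := by
  rw [sigma_one_apply_prime_pow hp, geom_sum_succ]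
  simp [Nat.ModEq]

theorem coprime_sigma_one_prime_pow {p : ℕ} (hp : p.Prime) (k : ℕ) :
    Nat.Coprime (σ 1 (p ^ k)) (p ^ k) := by
  refine Nat.Coprime.pow_right k ?_
  rw [Nat.Coprime, (sigma_one_prime_pow_modEq_one hp k).gcd_eq, Nat.gcd_one_left]

theorem sigma_one_prime_pow_two_mul_add_one {p : ℕ} (hp : p.Prime) (v : ℕ) :
    σ 1 (p ^ (2 * v + 1)) = σ 1 (p ^ v) * (p ^ (v + 1) + 1) := by
  rw [sigma_one_apply_prime_pow hp, sigma_one_apply_prime_pow hp,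
    show 2 * v + 1 + 1 = (v + 1) + (v + 1) by ring, sum_range_add]
  simp_rw [pow_add p (v + 1), ← mul_sum]
  ring

theorem lt_sigma_one {n : ℕ} (hn : 1 < n) : n < σ 1 n := by
  rw [sigma_one_apply, Nat.sum_divisors_eq_sum_properDivisors_add_self]
  have := single_le_sum (f := fun d => d) (fun _ _ => Nat.zero_le _)
    (Nat.one_mem_properDivisors_iff_one_lt.mpr hn)
  omega

theorem pow_succ_le_sigma_one_of_dvd_prime_pow {p n j k : ℕ} (hp : p.Prime)
    (hσ : σ 1 n ∣ p ^ k) (hn : 1 < n) (hj : p ^ j ≤ n) : p ^ (j + 1) ≤ σ 1 n := by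
  obtain ⟨α, -, hα⟩ := (Nat.dvd_prime_pow hp).mp hσ
  have hlt : p ^ j < p ^ α := hα ▸ hj.trans_lt (lt_sigma_one hn)
  rw [hα]
  exact Nat.pow_le_pow_right hp.pos ((Nat.pow_lt_pow_iff_right hp.one_lt).mp hlt)

theorem coprime_sigma_one_prime_pow_of_two_mul_eq {p v B : ℕ} (hp : p.Prime) (hp2 : Odd p)
    (hv : Even v) (hB : p ^ (v + 1) + 1 = 2 * B) : Nat.Coprime (σ 1 (p ^ v)) B := by
  have hodd : σ 1 (p ^ v) ≡ 1 [MOD 2] :=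
    (sigma_one_prime_pow_modEq hp (Nat.odd_iff.mp hp2) v).trans
      (Nat.odd_iff.mp hv.add_one)
  have hgeom : σ 1 (p ^ v) * (p - 1) + 1 = p ^ (v + 1) := by
    have := geom_sum_mul_add (p - 1) (v + 1)
    rwa [Nat.sub_add_cancel hp.one_le, ← sigma_one_apply_prime_pow hp] at this
  have h2B : 2 * B = 2 + σ 1 (p ^ v) * (p - 1) := by omega
  have : Nat.Coprime (σ 1 (p ^ v)) (2 * B) := by
    rw [h2B, Nat.coprime_add_mul_left_right, Nat.coprime_two_right]
    exact Nat.odd_iff.mpr hodd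
  exact this.coprime_mul_left_right

theorem sigma_one_sq_ne_of_add_one_eq_two_mul_sq {p m : ℕ} (hp : p.Prime) (hm : Odd m)
    (h : p + 1 = 2 * m ^ 2) : σ 1 (m ^ 2) ≠ p := by
  intro hσ
  obtain ⟨q, hq, hqm⟩ :=
    Nat.exists_prime_and_dvd (n := m) (by rintro rfl; exact hp.ne_one (by omega))
  have hqm2 : q ∣ m ^ 2 := dvd_pow hqm two_ne_zero
  obtain ⟨e, c, hqc, hmc⟩ :=
    Nat.exists_eq_pow_mul_and_not_dvd (pow_ne_zero 2 hm.pos.ne') q hq.ne_one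
  have he : e ≠ 0 := by
    rintro rfl
    rw [pow_zero, one_mul] at hmc
    exact hqc (hmc ▸ hqm2)
  have hdvd : σ 1 (q ^ e) ∣ p := by
    rw [← hσ, hmc, isMultiplicative_sigma.map_mul_of_coprime
      (((hq.coprime_iff_not_dvd).mpr hqc).pow_left e)]
    exact dvd_mul_right _ _
  have hqe : 1 < q ^ e := Nat.one_lt_pow he hq.one_lt
  have hσq : σ 1 (q ^ e) = p :=
    ((Nat.dvd_prime hp).mp hdvd).resolve_left (hqe.trans (lt_sigma_one hqe)).ne'
  have h2 : 1 + 1 ≡ 0 [MOD q] :=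
    ((hσq ▸ sigma_one_prime_pow_modEq_one hq e).add_right 1).symm.trans
      (Nat.modEq_zero_iff_dvd.mpr (h ▸ hqm2.mul_left 2))
  have hq2 : q = 2 :=
    (Nat.prime_dvd_prime_iff_eq hq Nat.prime_two).mp (Nat.modEq_zero_iff_dvd.mp h2)
  exact hm.not_two_dvd_nat (hq2 ▸ hqm)

theorem sigma_one_sq_ne_of_sigma_one_prime_pow_two_mul_add_one_eq {p v m : ℕ} (hp : p.Prime)
    (hp2 : Odd p) (hv : Even v) (hv0 : v ≠ 0) (h : σ 1 (p ^ (2 * v + 1)) = 2 * m ^ 2) :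
    σ 1 (m ^ 2) ≠ p ^ (2 * v + 1) := by
  intro hσ
  obtain ⟨B, hB⟩ : 2 ∣ p ^ (v + 1) + 1 := (hp2.pow.add_one).two_dvd
  set A := σ 1 (p ^ v)
  have hmAB : m ^ 2 = A * B := by
    rw [sigma_one_prime_pow_two_mul_add_one hp, hB] at h
    linarith
  have hσAB : σ 1 A * σ 1 B = p ^ (2 * v + 1) := by
    rw [← isMultiplicative_sigma.map_mul_of_coprime
      (coprime_sigma_one_prime_pow_of_two_mul_eq hp hp2 hv hB), ← hmAB, hσ]
  have hpv : 1 < p ^ v := Nat.one_lt_pow hv0 hp.one_lt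
  have hApv : p ^ v < A := lt_sigma_one hpv
  have hBpv : p ^ v < B := by
    have : 2 * p ^ v ≤ p ^ (v + 1) := by rw [pow_succ']; exact Nat.mul_le_mul_right _ hp.two_le
    omega
  have hA := pow_succ_le_sigma_one_of_dvd_prime_pow hp (Dvd.intro _ hσAB) (by omega) hApv.le
  have hB := pow_succ_le_sigma_one_of_dvd_prime_pow hp (Dvd.intro_left _ hσAB) (by omega) hBpv.le
  have := Nat.mul_le_mul hA hB
  rw [hσAB, ← pow_add, Nat.pow_le_pow_iff_right hp.one_lt] at this
  omega

theorem sigma_one_sq_ne_of_sigma_one_prime_pow_eq_two_mul_sq {p k m : ℕ} (hp : p.Prime)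
    (hp2 : Odd p) (hk : k % 4 = 1) (hm : Odd m) (h : σ 1 (p ^ k) = 2 * m ^ 2) :
    σ 1 (m ^ 2) ≠ p ^ k := by
  obtain ⟨v, rfl⟩ : ∃ v, k = 2 * v + 1 := ⟨k / 2, by omega⟩
  rcases Nat.eq_zero_or_pos v with rfl | hv
  · rw [sigma_one_apply_prime_pow hp] at h
    simpa using sigma_one_sq_ne_of_add_one_eq_two_mul_sq hp hm (by simpa [add_comm] using h)
  · exact sigma_one_sq_ne_of_sigma_one_prime_pow_two_mul_add_one_eq hp hp2
      (Nat.even_iff.mpr (by omega)) hv.ne' h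

theorem sigma_one_mul_sigma_one_of_perfect {a b : ℕ} (hab : Nat.Coprime a b)
    (h : Nat.Perfect (a * b)) : σ 1 a * σ 1 b = 2 * (a * b) := by
  rw [← isMultiplicative_sigma.map_mul_of_coprime hab, sigma_one_apply]
  exact (Nat.perfect_iff_sum_divisors_eq_two_mul h.2).mp h

theorem three_mul_le_two_mul_sq {m s i : ℕ} (hm : Odd m) (hs : Even s) (hi : 2 * m ^ 2 = s * i)
    (hi1 : i ≠ 1) : 3 * s ≤ 2 * m ^ 2 := by
  obtain ⟨d, rfl⟩ := hs.two_dvd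
  have hmdi : m ^ 2 = d * i := Nat.eq_of_mul_eq_mul_left two_pos (by rw [hi, mul_assoc])
  have hi3 : 3 ≤ i := by
    have := Nat.odd_iff.mp (Nat.Odd.of_mul_right (hmdi ▸ hm.pow))
    omega
  rw [hi, mul_comm]
  exact Nat.mul_le_mul_left _ hi3

theorem stmt_1 (p k m : ℕ) (hp : p.Prime) (hp4 : p % 4 = 1) (hk4 : k % 4 = 1)
    (hcop : Nat.Coprime p m) (hodd : Odd (p ^ k * m ^ 2))
    (hperf : Nat.Perfect (p ^ k * m ^ 2)) :
    (ArithmeticFunction.sigma 1 (p ^ k) : ℚ) ≤ 2 / 3 * (m ^ 2 : ℚ) := by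
  have hp2 : Odd p := Nat.odd_iff.mpr (by omega)
  have hm : Odd m := (Nat.odd_pow_iff two_ne_zero).mp (Nat.Odd.of_mul_right hodd)
  have hσN := sigma_one_mul_sigma_one_of_perfect ((hcop.pow_right 2).pow_left k) hperf
  obtain ⟨i, hi⟩ : σ 1 (p ^ k) ∣ 2 * m ^ 2 :=
    (coprime_sigma_one_prime_pow hp k).dvd_of_dvd_mul_right ⟨σ 1 (m ^ 2), by rw [hσN]; ring⟩
  have hi1 : i ≠ 1 := by
    rintro rfl
    rw [mul_one] at hi
    have h : 2 * m ^ 2 * σ 1 (m ^ 2) = 2 * m ^ 2 * p ^ k := by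
      rw [hi, hσN, ← hi]
      ring
    exact sigma_one_sq_ne_of_sigma_one_prime_pow_eq_two_mul_sq hp hp2 hk4 hm hi.symm
      (Nat.eq_of_mul_eq_mul_left (by have := hm.pos; positivity) h)
  have hσ_even : Even (σ 1 (p ^ k)) := even_iff_two_dvd.mpr <| Nat.modEq_zero_iff_dvd.mp <|
    (sigma_one_prime_pow_modEq hp (Nat.odd_iff.mp hp2) k).trans (by rw [Nat.ModEq]; omega)
  have h3 : (3 : ℚ) * σ 1 (p ^ k) ≤ 2 * m ^ 2 := by
    exact_mod_cast three_mul_le_two_mul_sq hm hσ_even hi hi1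
  linarith
end

section
/- Let N = p^k · m^2 be an odd perfect number, where p is a prime with p ≡ k ≡ 1 (mod 4) and gcd(p, m) = 1. Then σ(m^2) ≥ 3 · p^k. -/
/-!
Write `k = 2j + 1`. As `σ(p^k) ≡ 1 (mod p)`, the identity `σ(p^k) σ(m²) = 2 p^k m²` gives
`σ(m²) = p^k t` with `σ(p^k) t = 2 m²`, and `t` is odd since `σ(p^k)` is even and `m` is odd.
So it suffices to exclude `t = 1`. Then `σ(p^k) = σ(p^j) (1 + p^(j+1))` splits `m² = A B` with
`A = σ(p^j)`, `2B = 1 + p^(j+1)` and `A, B` coprime, so `σ(A) = p^α` and `σ(B) = p^β` with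
`α + β = 2j + 1`. Since `B > p^j`, and `A > p^j` when `j > 0`, both exponents would exceed `j`;
hence `k = 1`. But then `σ(m²) = p` is prime with `σ(m²) + 1 = 2 m²`, so `m² = q^a` is a prime
power with `σ(q^a) = 2 q^a - 1`, which forces `q = 2`, although `m` is odd.
-/

open Finset ArithmeticFunction
open scoped ArithmeticFunction.sigma

namespace Nat

theorem lt_sigma_one {n : ℕ} (hn : 1 < n) : n < σ 1 n := by
  rw [sigma_one_apply, sum_divisors_eq_sum_properDivisors_add_self]
  have : 1 ≤ ∑ i ∈ properDivisors n, i :=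
    single_le_sum (f := fun i => i) (fun _ _ => Nat.zero_le _)
      (one_mem_properDivisors_iff_one_lt.mpr hn)
  omega

theorem le_sigma_one (n : ℕ) : n ≤ σ 1 n := by
  rw [sigma_one_apply, sum_divisors_eq_sum_properDivisors_add_self]
  exact Nat.le_add_left _ _

theorem Perfect.sigma_one_mul_sigma_one {a b : ℕ} (hab : a.Coprime b) (h : (a * b).Perfect) :
    σ 1 a * σ 1 b = 2 * (a * b) := by
  rw [← isMultiplicative_sigma.map_mul_of_coprime hab, sigma_one_apply]
  exact (perfect_iff_sum_divisors_eq_two_mul h.2).mp h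

theorem Prime.coprime_sigma_one_pow {p : ℕ} (hp : p.Prime) (k : ℕ) :
    p.Coprime (σ 1 (p ^ k)) := by
  rw [sigma_one_apply_prime_pow hp, sum_range_succ', pow_zero]
  simp only [pow_succ, ← sum_mul, coprime_mul_right_add_right, coprime_one_right_eq_true]

theorem sigma_one_prime_pow_two_mul_add_one {p : ℕ} (hp : p.Prime) (j : ℕ) :
    σ 1 (p ^ (2 * j + 1)) = σ 1 (p ^ j) * (1 + p ^ (j + 1)) := by
  rw [sigma_one_apply_prime_pow hp, sigma_one_apply_prime_pow hp,
    show 2 * j + 1 + 1 = (j + 1) + (j + 1) by ring, sum_range_add, mul_add, mul_one, sum_mul]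
  simp only [pow_add, mul_comm]

theorem isPrimePow_of_prime_sigma_one {n : ℕ} (h : (σ 1 n).Prime) : IsPrimePow n := by
  induction n using recOnPosPrimePosCoprime with
  | prime_pow q a hq ha => exact (isPrimePow_pow_iff ha.ne').2 hq.isPrimePow
  | zero => norm_num at h
  | one => norm_num at h
  | coprime a b ha hb hab _ _ =>
    rw [isMultiplicative_sigma.map_mul_of_coprime hab] at h
    exact absurd h (not_prime_mul (by simpa using ha.ne') (by simpa using hb.ne'))

theorem Prime.eq_two_of_sigma_one_pow_add_one {q a : ℕ} (hq : q.Prime) (ha : a ≠ 0)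
    (h : σ 1 (q ^ a) + 1 = 2 * q ^ a) : q = 2 := by
  rw [sigma_one_apply_prime_pow hq] at h
  have hz : ((∑ i ∈ range (a + 1), q ^ i : ℕ) : ℤ) + 1 = 2 * (q : ℤ) ^ a := by exact_mod_cast h
  push_cast at hz
  have hgeom := geom_sum_mul (q : ℤ) (a + 1)
  have hfac : ((q : ℤ) - 2) * ((q : ℤ) ^ a - 1) = 0 := by
    rw [pow_succ] at hgeom
    linear_combination hgeom - ((q : ℤ) - 1) * hz
  have hqa : (1 : ℤ) < (q : ℤ) ^ a := by exact_mod_cast one_lt_pow ha hq.one_lt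
  rcases _root_.mul_eq_zero.1 hfac with h2 | h1
  · omega
  · linarith

theorem not_prime_sigma_one_of_odd_of_sigma_one_add_one {n : ℕ} (hn : Odd n)
    (h : σ 1 n + 1 = 2 * n) : ¬ (σ 1 n).Prime := by
  intro hprime
  obtain ⟨q, a, hq, ha, rfl⟩ := isPrimePow_of_prime_sigma_one hprime
  rw [← Nat.prime_iff] at hq
  rw [hq.eq_two_of_sigma_one_pow_add_one ha.ne' h] at hn
  exact (Nat.not_even_iff_odd.2 hn) (even_two.pow_of_ne_zero ha.ne')

theorem eq_zero_of_sigma_one_sq_eq_pow {p m j : ℕ} (hp : p.Prime) (hpodd : Odd p) (hm : Odd m)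
    (hσm : σ 1 (m ^ 2) = p ^ (2 * j + 1)) (hσp : σ 1 (p ^ (2 * j + 1)) = 2 * m ^ 2) :
    j = 0 := by
  set A := σ 1 (p ^ j)
  obtain ⟨B, hB⟩ : Even (1 + p ^ (j + 1)) := odd_one.add_odd hpodd.pow
  have hAB : A * B = m ^ 2 := by
    rw [sigma_one_prime_pow_two_mul_add_one hp, hB] at hσp
    linarith
  have hA_odd : Odd A := (Nat.odd_mul.1 (hAB ▸ hm.pow)).1
  have hcop : A.Coprime B := by
    have hgeom := geom_sum_mul_add (p - 1) (j + 1)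
    rw [Nat.sub_add_cancel hp.one_le, ← sigma_one_apply_prime_pow hp] at hgeom
    have h2B : B + B = 2 + (p - 1) * A := by rw [← hB, ← hgeom]; ring
    have : A.Coprime (B + B) := by
      rw [h2B, coprime_add_mul_right_right]
      exact hA_odd.coprime_two_right
    exact this.coprime_dvd_right (Dvd.intro_left 2 (two_mul B))
  have hσAB : σ 1 A * σ 1 B = p ^ (2 * j + 1) := by
    rw [← isMultiplicative_sigma.map_mul_of_coprime hcop, hAB, hσm]
  obtain ⟨α, -, hα⟩ := (dvd_prime_pow hp).1 (Dvd.intro _ hσAB)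
  obtain ⟨β, -, hβ⟩ := (dvd_prime_pow hp).1 (Dvd.intro_left _ hσAB)
  have hαβ : α + β = 2 * j + 1 :=
    Nat.pow_right_injective hp.two_le (by simp only [pow_add, ← hα, ← hβ, hσAB])
  have hjβ : j < β := by
    have hpB : p ^ j < B := by
      have : 2 * p ^ j ≤ p ^ (j + 1) := by
        rw [pow_succ']; exact Nat.mul_le_mul_right _ hp.two_le
      omega
    rw [← Nat.pow_lt_pow_iff_right hp.one_lt, ← hβ]
    exact hpB.trans_le (le_sigma_one B)
  by_contra hj
  have hjα : j < α := by
    rw [← Nat.pow_lt_pow_iff_right hp.one_lt, ← hα]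
    exact (lt_sigma_one (one_lt_pow hj hp.one_lt)).trans_le (le_sigma_one A)
  omega

theorem sigma_one_sq_ne_pow {p m j : ℕ} (hp : p.Prime) (hpodd : Odd p) (hm : Odd m)
    (hσp : σ 1 (p ^ (2 * j + 1)) = 2 * m ^ 2) : σ 1 (m ^ 2) ≠ p ^ (2 * j + 1) := by
  intro hσm
  obtain rfl := eq_zero_of_sigma_one_sq_eq_pow hp hpodd hm hσm hσp
  rw [mul_zero, zero_add, pow_one] at hσm
  refine not_prime_sigma_one_of_odd_of_sigma_one_add_one hm.pow ?_ (hσm ▸ hp)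
  rw [← hσp, hσm, sigma_one_apply_prime_pow hp, sum_range_succ, sum_range_one]
  ring

end Nat

theorem stmt_3 (p k m : ℕ) (hp : p.Prime) (hp4 : p % 4 = 1) (hk4 : k % 4 = 1)
    (hcop : Nat.Coprime p m) (hodd : Odd (p ^ k * m ^ 2))
    (hperf : Nat.Perfect (p ^ k * m ^ 2)) :
    ArithmeticFunction.sigma 1 (m ^ 2) ≥ 3 * p ^ k := by
  have hpodd : Odd p := Nat.odd_iff.2 (by omega)
  have hmodd : Odd m := (Nat.odd_pow_iff two_ne_zero).1 (Nat.odd_mul.1 hodd).2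
  obtain ⟨j, rfl⟩ : ∃ j, k = 2 * j + 1 := ⟨k / 2, by omega⟩
  have hσ := hperf.sigma_one_mul_sigma_one (hcop.pow _ _)
  obtain ⟨t, ht⟩ : p ^ (2 * j + 1) ∣ σ 1 (m ^ 2) :=
    ((hp.coprime_sigma_one_pow _).pow_left _).dvd_of_dvd_mul_left
      ⟨2 * m ^ 2, by rw [hσ]; ring⟩
  have hσt : σ 1 (p ^ (2 * j + 1)) * t = 2 * m ^ 2 := by
    refine Nat.eq_of_mul_eq_mul_left (pow_pos hp.pos (2 * j + 1)) ?_
    rw [ht] at hσ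
    linarith
  have ht_odd : Odd t := by
    obtain ⟨c, hc⟩ : Even (σ 1 (p ^ (2 * j + 1))) := by
      rw [Nat.sigma_one_prime_pow_two_mul_add_one hp]
      exact (odd_one.add_odd hpodd.pow).mul_left _
    have hct : c * t = m ^ 2 := by rw [hc] at hσt; linarith
    exact (Nat.odd_mul.1 (hct ▸ hmodd.pow)).2
  have ht1 : t ≠ 1 := by
    rintro rfl
    rw [mul_one] at hσt ht
    exact Nat.sigma_one_sq_ne_pow hp hpodd hmodd hσt ht
  have ht3 : 3 ≤ t := by obtain ⟨r, rfl⟩ := ht_odd; omega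
  rw [ht, ge_iff_le, mul_comm]
  exact Nat.mul_le_mul_left _ ht3
end

section
/- Let N = p^k · m^2 be an odd perfect number, where p is a prime with p ≡ k ≡ 1 (mod 4) and gcd(p, m) = 1. Then 57/20 < σ(p^k)/p^k + σ(m^2)/m^2 < 3. -/
/-!
Write `x = σ(p^k)/p^k` and `y = σ(m²)/m²`. Multiplicativity of `σ` and perfection give `x * y = 2`,
and the geometric series bounds `1 < x < p/(p-1) ≤ 5/4`. Since `x ↦ x + 2/x` is strictly decreasing
on `(0, √2]`, `x + y = x + 2/x` lies strictly between `5/4 + 8/5 = 57/20` and `1 + 2 = 3`.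
-/

open ArithmeticFunction
open scoped ArithmeticFunction.sigma

theorem add_div_lt_add_div_of_mul_lt {K : Type*} [Field K] [LinearOrder K] [IsStrictOrderedRing K]
    {c x y : K} (hx : 0 < x) (hxy : x < y) (hc : x * y < c) :
    y + c / y < x + c / x := by
  have hy : 0 < y := hx.trans hxy
  have hdiff : x + c / x - (y + c / y) = (y - x) * (c - x * y) / (x * y) := by
    field_simp
    ring
  have hpos : 0 < (y - x) * (c - x * y) / (x * y) :=
    div_pos (mul_pos (sub_pos.2 hxy) (sub_pos.2 hc)) (mul_pos hx hy)
  linarith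

theorem Nat.Perfect.sigma_div_mul_sigma_div {a b : ℕ} (h : (a * b).Perfect) (hab : a.Coprime b) :
    (σ 1 a / a : ℚ) * (σ 1 b / b) = 2 := by
  have hpos : 0 < a * b := h.2
  have hσ : σ 1 a * σ 1 b = 2 * (a * b) := by
    rw [← isMultiplicative_sigma.map_mul_of_coprime hab, sigma_one_apply]
    exact (Nat.perfect_iff_sum_divisors_eq_two_mul hpos).mp h
  have ha : (a : ℚ) ≠ 0 := by exact_mod_cast (Nat.pos_of_mul_pos_right hpos).ne'
  have hb : (b : ℚ) ≠ 0 := by exact_mod_cast (Nat.pos_of_mul_pos_left hpos).ne'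
  field_simp
  exact_mod_cast hσ.trans (mul_comm _ _)

namespace Nat.Prime

theorem one_lt_sigma_pow_div {p k : ℕ} (hp : p.Prime) (hk : k ≠ 0) :
    1 < (σ 1 (p ^ k) / p ^ k : ℚ) := by
  have hσ : p ^ k < σ 1 (p ^ k) := by
    rw [sigma_one_apply_prime_pow hp, Finset.sum_range_succ, Nat.lt_add_left_iff_pos]
    exact Finset.sum_pos (fun i _ => pow_pos hp.pos i) (Finset.nonempty_range_iff.2 hk)
  rw [one_lt_div (pow_pos (by exact_mod_cast hp.pos) k)]
  exact_mod_cast hσ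

theorem sigma_pow_div_lt {p : ℕ} (hp : p.Prime) (k : ℕ) :
    (σ 1 (p ^ k) / p ^ k : ℚ) < p / (p - 1) := by
  have hp1 : (1 : ℚ) < p := by exact_mod_cast hp.one_lt
  have hpk : (0 : ℚ) < p ^ k := by positivity
  have hgeom : (σ 1 (p ^ k) : ℚ) * (p - 1) = p ^ (k + 1) - 1 := by
    rw [sigma_one_apply_prime_pow hp]
    push_cast
    exact geom_sum_mul _ _
  rw [div_lt_div_iff₀ hpk (by linarith), hgeom, pow_succ]
  linarith

end Nat.Prime

theorem stmt_4_general (p k m : ℕ) (hp : p.Prime) (hp4 : p % 4 = 1) (hk4 : k % 4 = 1)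
    (hcop : Nat.Coprime p m)
    (hperf : Nat.Perfect (p ^ k * m ^ 2)) :
    57 / 20 < (ArithmeticFunction.sigma 1 (p ^ k) : ℚ) / (p ^ k : ℚ) + (ArithmeticFunction.sigma 1 (m ^ 2) : ℚ) / (m ^ 2 : ℚ) ∧
      (ArithmeticFunction.sigma 1 (p ^ k) : ℚ) / (p ^ k : ℚ) + (ArithmeticFunction.sigma 1 (m ^ 2) : ℚ) / (m ^ 2 : ℚ) < 3 := by
  set x : ℚ := σ 1 (p ^ k) / p ^ k
  set y : ℚ := σ 1 (m ^ 2) / m ^ 2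
  have hxy : x * y = 2 := by
    simpa only [Nat.cast_pow] using hperf.sigma_div_mul_sigma_div (hcop.pow k 2)
  have hx_gt : 1 < x := hp.one_lt_sigma_pow_div (by omega)
  have hx_lt : x < 5 / 4 := by
    have hp5 : (5 : ℚ) ≤ p := by exact_mod_cast (show 5 ≤ p by have := hp.two_le; omega)
    calc x < p / (p - 1) := hp.sigma_pow_div_lt k
      _ ≤ 5 / 4 := by rw [div_le_div_iff₀ (by linarith) (by norm_num)]; linarith
  have hy : y = 2 / x := by rw [eq_div_iff (by linarith), mul_comm, hxy]
  rw [hy]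
  constructor
  · calc (57 / 20 : ℚ) = 5 / 4 + 2 / (5 / 4) := by norm_num
      _ < x + 2 / x := add_div_lt_add_div_of_mul_lt (by linarith) hx_lt (by nlinarith)
  · calc x + 2 / x < 1 + 2 / 1 := add_div_lt_add_div_of_mul_lt one_pos hx_gt (by linarith)
      _ = 3 := by norm_num

theorem stmt_4 (p k m : ℕ) (hp : p.Prime) (hp4 : p % 4 = 1) (hk4 : k % 4 = 1)
    (hcop : Nat.Coprime p m) (hodd : Odd (p ^ k * m ^ 2))
    (hperf : Nat.Perfect (p ^ k * m ^ 2)) :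
    57 / 20 < (ArithmeticFunction.sigma 1 (p ^ k) : ℚ) / (p ^ k : ℚ) + (ArithmeticFunction.sigma 1 (m ^ 2) : ℚ) / (m ^ 2 : ℚ) ∧
      (ArithmeticFunction.sigma 1 (p ^ k) : ℚ) / (p ^ k : ℚ) + (ArithmeticFunction.sigma 1 (m ^ 2) : ℚ) / (m ^ 2 : ℚ) < 3 :=
  stmt_4_general p k m hp hp4 hk4 hcop hperf
end

section
/- Let N = p^k · m^2 be an odd perfect number, where p is a prime with p ≡ k ≡ 1 (mod 4) and gcd(p, m) = 1. Then σ(p^k)/p^k < σ(m)/m. -/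
/-!
In terms of the abundancy index I(n) = σ(n)/n, which is multiplicative on coprime arguments and
submultiplicative in general, perfection gives I(p^k) · I(m²) = 2. The Euler factor satisfies
I(p^k) < p/(p-1) ≤ 5/4 because p ≥ 5, so I(m)² ≥ I(m²) ≥ 8/5 > 25/16 > I(p^k)².
-/

open Finset ArithmeticFunction
open scoped ArithmeticFunction.sigma

namespace Nat

lemma abundancyIndex_eq_sigma_div (n : ℕ) : n.abundancyIndex = (σ 1 n : ℚ) / n := by
  rw [abundancyIndex, sigma_one_apply, cast_sum]

lemma abundancyIndex_nonneg (n : ℕ) : 0 ≤ n.abundancyIndex := by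
  unfold abundancyIndex; positivity

lemma Perfect.abundancyIndex_eq_two {n : ℕ} (h : n.Perfect) : n.abundancyIndex = 2 := by
  have hn : (n : ℚ) ≠ 0 := by exact_mod_cast h.2.ne'
  rw [abundancyIndex, div_eq_iff hn]
  exact_mod_cast (perfect_iff_sum_divisors_eq_two_mul h.2).mp h

lemma Coprime.abundancyIndex_mul {m n : ℕ} (hmn : m.Coprime n) :
    (m * n).abundancyIndex = m.abundancyIndex * n.abundancyIndex := by
  simp only [abundancyIndex, hmn.sum_divisors_mul, cast_mul, mul_div_mul_comm]

lemma sum_divisors_mul_le (m n : ℕ) :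
    ∑ d ∈ (m * n).divisors, d ≤ (∑ d ∈ m.divisors, d) * ∑ d ∈ n.divisors, d := by
  rw [divisors_mul, ← image_mul_product, sum_mul_sum, ← sum_product']
  exact sum_image_le_of_nonneg fun _ _ ↦ zero_le _

lemma abundancyIndex_mul_le (m n : ℕ) :
    (m * n).abundancyIndex ≤ m.abundancyIndex * n.abundancyIndex := by
  rw [abundancyIndex, abundancyIndex, abundancyIndex, cast_mul, ← mul_div_mul_comm]
  gcongr
  exact_mod_cast sum_divisors_mul_le m n

lemma Prime.abundancyIndex_pow_lt {p : ℕ} (hp : p.Prime) (k : ℕ) :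
    (p ^ k).abundancyIndex < p / (p - 1) := by
  have hp1 : (1 : ℚ) < p := by exact_mod_cast hp.one_lt
  have hgeom := geom_sum_mul (p : ℚ) (k + 1)
  rw [abundancyIndex, sum_divisors_prime_pow hp,
    div_lt_div_iff₀ (by positivity [hp.pos]) (by linarith)]
  push_cast
  rw [pow_succ] at hgeom
  linarith

end Nat

theorem stmt_6_general (p k m : ℕ) (hp : p.Prime) (hp4 : p % 4 = 1)
    (hcop : Nat.Coprime p m)
    (hperf : Nat.Perfect (p ^ k * m ^ 2)) :
    (ArithmeticFunction.sigma 1 (p ^ k) : ℚ) / (p ^ k : ℚ) < (ArithmeticFunction.sigma 1 m : ℚ) / (m : ℚ) := by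
  have hp5 : (5 : ℚ) ≤ p := by have := hp.two_le; exact_mod_cast (by omega : 5 ≤ p)
  have hEuler : (p ^ k).abundancyIndex < 5 / 4 := by
    refine (hp.abundancyIndex_pow_lt k).trans_le ?_
    rw [div_le_div_iff₀ (by linarith) (by norm_num)]
    linarith
  have hperfect : (p ^ k).abundancyIndex * (m ^ 2).abundancyIndex = 2 := by
    rw [← (hcop.pow k 2).abundancyIndex_mul, hperf.abundancyIndex_eq_two]
  have hsq : (m ^ 2).abundancyIndex ≤ m.abundancyIndex ^ 2 := by
    simpa only [sq] using Nat.abundancyIndex_mul_le m m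
  have hm_sq : 8 / 5 ≤ m.abundancyIndex ^ 2 := by
    nlinarith [mul_le_mul_of_nonneg_right hEuler.le (m ^ 2).abundancyIndex_nonneg]
  simp only [← Nat.cast_pow, ← Nat.abundancyIndex_eq_sigma_div]
  refine lt_of_pow_lt_pow_left₀ 2 m.abundancyIndex_nonneg ?_
  nlinarith [(p ^ k).abundancyIndex_nonneg]

theorem stmt_6 (p k m : ℕ) (hp : p.Prime) (hp4 : p % 4 = 1) (hk4 : k % 4 = 1)
    (hcop : Nat.Coprime p m) (hodd : Odd (p ^ k * m ^ 2))
    (hperf : Nat.Perfect (p ^ k * m ^ 2)) :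
    (ArithmeticFunction.sigma 1 (p ^ k) : ℚ) / (p ^ k : ℚ) < (ArithmeticFunction.sigma 1 m : ℚ) / (m : ℚ) :=
  stmt_6_general p k m hp hp4 hcop hperf
end

section
/- Let N = p^k · m^2 be an odd perfect number, where p is a prime with p ≡ k ≡ 1 (mod 4) and gcd(p, m) = 1. If m < σ(p^k) and σ(p^k)/m < σ(m)/p^k, then (4/5) · m < p^k < √2 · m. -/
/-!
The lower bound comes from the Euler factor alone: for `p ≥ 5` the geometric sum `σ(p^k)` is less
than `(5/4) p^k`, and `m < σ(p^k)`. For the upper bound, `σ(p^k) > p^k` together with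
`σ(p^k) σ(m²) = 2 p^k m²` makes `m²` deficient, hence so is `m` (as `m σ(m) ≤ σ(m²)`), and then
`p^{2k} < p^k σ(p^k) < m σ(m) < 2 m²`.
-/

open ArithmeticFunction Finset
open scoped ArithmeticFunction.sigma

lemma four_mul_geom_sum_lt_five_mul_pow {p : ℕ} (hp : 5 ≤ p) (k : ℕ) :
    4 * ∑ i ∈ range (k + 1), p ^ i < 5 * p ^ k := by
  induction k with
  | zero => simp
  | succ n ih =>
    have : 5 * p ^ n ≤ p ^ (n + 1) := by
      rw [pow_succ']
      exact Nat.mul_le_mul_right _ hp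
    rw [sum_range_succ]
    omega

lemma pow_lt_sigma_one_prime_pow {p k : ℕ} (hp : p.Prime) (hk : k ≠ 0) :
    p ^ k < σ 1 (p ^ k) := by
  rw [sigma_one_apply_prime_pow hp, sum_range_succ, Nat.lt_add_left_iff_pos]
  exact sum_pos (fun i _ ↦ pow_pos hp.pos i) (nonempty_range_iff.mpr hk)

lemma mul_sigma_one_le_sigma_one_mul (a b : ℕ) : a * σ 1 b ≤ σ 1 (a * b) := by
  rcases Nat.eq_zero_or_pos a with rfl | ha
  · simp
  rw [sigma_one_apply, sigma_one_apply, mul_sum,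
    ← sum_image (f := fun d ↦ d) (g := (a * ·))
      (fun x _ y _ h ↦ Nat.eq_of_mul_eq_mul_left ha h)]
  refine sum_le_sum_of_subset fun x hx ↦ ?_
  obtain ⟨d, hd, rfl⟩ := mem_image.mp hx
  rw [Nat.mem_divisors] at hd ⊢
  exact ⟨mul_dvd_mul_left a hd.1, mul_ne_zero ha.ne' hd.2⟩

lemma sigma_one_lt_two_mul_of_perfect_mul {a b : ℕ} (hab : a.Coprime b) (hperf : (a * b).Perfect)
    (ha : a < σ 1 a) : σ 1 b < 2 * b := by
  have hσ : σ 1 a * σ 1 b = 2 * (a * b) := by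
    rw [← isMultiplicative_sigma.map_mul_of_coprime hab, sigma_one_apply]
    exact (Nat.perfect_iff_sum_divisors_eq_two_mul hperf.2).mp hperf
  have hb : 0 < σ 1 b := Nat.pos_of_mul_pos_left (hσ ▸ Nat.mul_pos two_pos hperf.2)
  have : a * σ 1 b < a * (2 * b) := by
    calc a * σ 1 b < σ 1 a * σ 1 b := Nat.mul_lt_mul_of_pos_right ha hb
      _ = a * (2 * b) := by rw [hσ]; ring
  exact Nat.lt_of_mul_lt_mul_left this

lemma sigma_one_lt_two_mul_of_sq {m : ℕ} (h : σ 1 (m ^ 2) < 2 * m ^ 2) : σ 1 m < 2 * m := by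
  have : m * σ 1 m < m * (2 * m) := by
    calc m * σ 1 m ≤ σ 1 (m * m) := mul_sigma_one_le_sigma_one_mul m m
      _ < m * (2 * m) := by rw [← sq]; linarith
  exact Nat.lt_of_mul_lt_mul_left this

theorem stmt_10_general (p k m : ℕ) (hp : p.Prime) (hp4 : p % 4 = 1) (hk4 : k % 4 = 1)
    (hcop : Nat.Coprime p m)
    (hperf : Nat.Perfect (p ^ k * m ^ 2)) (h1 : m < ArithmeticFunction.sigma 1 (p ^ k))
    (h2 : (ArithmeticFunction.sigma 1 (p ^ k) : ℝ) / (m : ℝ) < (ArithmeticFunction.sigma 1 m : ℝ) / (p ^ k : ℝ)) :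
    (4 / 5 : ℝ) * (m : ℝ) < (p ^ k : ℝ) ∧ (p ^ k : ℝ) < Real.sqrt 2 * (m : ℝ) := by
  have hp5 : 5 ≤ p := by have := hp.two_le; omega
  have hm : 0 < m := Nat.pos_of_ne_zero (by rintro rfl; simpa using hperf.2)
  have hpk : 0 < p ^ k := pow_pos hp.pos k
  have hσpk : p ^ k < σ 1 (p ^ k) := pow_lt_sigma_one_prime_pow hp (by omega)
  have hσm : σ 1 m < 2 * m := sigma_one_lt_two_mul_of_sq <|
    sigma_one_lt_two_mul_of_perfect_mul ((hcop.pow_left k).pow_right 2) hperf hσpk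
  have hcross : p ^ k * σ 1 (p ^ k) < m * σ 1 m := by
    rw [div_lt_div_iff₀ (by positivity) (by positivity)] at h2
    exact_mod_cast (by linarith : ((p : ℝ) ^ k) * σ 1 (p ^ k) < m * σ 1 m)
  have hlower : 4 * m < 5 * p ^ k := by
    have := four_mul_geom_sum_lt_five_mul_pow hp5 k
    rw [← sigma_one_apply_prime_pow hp] at this
    omega
  have hupper : (p ^ k) ^ 2 < 2 * m ^ 2 := by
    calc (p ^ k) ^ 2 = p ^ k * p ^ k := sq _
      _ < p ^ k * σ 1 (p ^ k) := Nat.mul_lt_mul_of_pos_left hσpk hpk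
      _ < m * σ 1 m := hcross
      _ < m * (2 * m) := Nat.mul_lt_mul_of_pos_left hσm hm
      _ = 2 * m ^ 2 := by ring
  constructor
  · have : (4 * m : ℝ) < 5 * (p : ℝ) ^ k := by exact_mod_cast hlower
    linarith
  · have : ((p : ℝ) ^ k) ^ 2 < (√2 * m) ^ 2 := by
      rw [mul_pow, Real.sq_sqrt zero_le_two]
      exact_mod_cast hupper
    exact lt_of_pow_lt_pow_left₀ 2 (by positivity) this

theorem stmt_10 (p k m : ℕ) (hp : p.Prime) (hp4 : p % 4 = 1) (hk4 : k % 4 = 1)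
    (hcop : Nat.Coprime p m) (hodd : Odd (p ^ k * m ^ 2))
    (hperf : Nat.Perfect (p ^ k * m ^ 2)) (h1 : m < ArithmeticFunction.sigma 1 (p ^ k))
    (h2 : (ArithmeticFunction.sigma 1 (p ^ k) : ℝ) / (m : ℝ) < (ArithmeticFunction.sigma 1 m : ℝ) / (p ^ k : ℝ)) :
    (4 / 5 : ℝ) * (m : ℝ) < (p ^ k : ℝ) ∧ (p ^ k : ℝ) < Real.sqrt 2 * (m : ℝ) :=
  stmt_10_general p k m hp hp4 hk4 hcop hperf h1 h2
end

section
/- Let N = p^k · m^2 be an odd perfect number, where p is a prime with p ≡ k ≡ 1 (mod 4) and gcd(p, m) = 1. Then m^2 - p^k ≠ 4. -/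
/-!
If `m² - p^k = 4` then `(m - 2)(m + 2) = p^k`, so both factors are powers of `p`. Two positive
powers of `p` cannot differ by `4` because `p ∤ 4`, hence `m - 2 = 1`. Then `m = 3`, `p^k = 5`,
and the number would be `45`, which is not perfect.
-/

theorem Nat.Prime.eq_one_of_mul_add_eq_pow {p a d n : ℕ} (hp : p.Prime) (hpd : ¬p ∣ d)
    (h : a * (a + d) = p ^ n) : a = 1 := by
  obtain ⟨i, -, rfl⟩ := (Nat.dvd_prime_pow hp).mp (Dvd.intro _ h)
  obtain ⟨j, -, hj⟩ := (Nat.dvd_prime_pow hp).mp (Dvd.intro_left _ h)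
  rcases Nat.eq_zero_or_pos i with rfl | hi
  · exact pow_zero p
  have hpa : p ∣ p ^ i := dvd_pow_self p hi.ne'
  have hj0 : j ≠ 0 := by
    rintro rfl
    rw [pow_zero] at hj
    have := Nat.one_lt_pow hi.ne' hp.one_lt
    omega
  exact absurd ((Nat.dvd_add_right hpa).mp (hj ▸ dvd_pow_self p hj0)) hpd

theorem Nat.Prime.eq_three_of_sq_eq_pow_add_four {p n m : ℕ} (hp : p.Prime) (hp4 : ¬p ∣ 4)
    (h : m ^ 2 = p ^ n + 4) : m = 3 := by
  have hm : 2 ≤ m := by nlinarith [pow_pos hp.pos n]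
  obtain ⟨a, rfl⟩ : ∃ a, m = a + 2 := ⟨m - 2, by omega⟩
  have ha : a * (a + 4) = p ^ n := by linarith
  rw [hp.eq_one_of_mul_add_eq_pow hp4 ha]

theorem Nat.not_perfect_forty_five : ¬Nat.Perfect 45 := by
  rw [Nat.perfect_iff_sum_divisors_eq_two_mul (by norm_num)]
  decide

theorem stmt_14_general (p k m : ℕ) (hp : p.Prime) (hp4 : p % 4 = 1)
    (hperf : Nat.Perfect (p ^ k * m ^ 2)) :
    (m : ℤ) ^ 2 - (p : ℤ) ^ k ≠ 4 := by
  intro h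
  have hsq : m ^ 2 = p ^ k + 4 := by
    have : (m : ℤ) ^ 2 = (p : ℤ) ^ k + 4 := by linarith
    exact_mod_cast this
  have hp_not_dvd : ¬p ∣ 4 := fun hd => by
    have := Nat.le_of_dvd (by norm_num) hd
    have := hp.two_le
    omega
  obtain rfl := hp.eq_three_of_sq_eq_pow_add_four hp_not_dvd hsq
  have hpk : p ^ k = 5 := by omega
  rw [hpk] at hperf
  exact Nat.not_perfect_forty_five hperf

theorem stmt_14 (p k m : ℕ) (hp : p.Prime) (hp4 : p % 4 = 1) (hk4 : k % 4 = 1)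
    (hcop : Nat.Coprime p m) (hodd : Odd (p ^ k * m ^ 2))
    (hperf : Nat.Perfect (p ^ k * m ^ 2)) :
    (m : ℤ) ^ 2 - (p : ℤ) ^ k ≠ 4 :=
  stmt_14_general p k m hp hp4 hperf
end

section
/- Let N be an odd perfect number with r = ω(N) distinct prime factors. Then N^(2 - r) ≤ (1/3) · (2/3)^(r - 1), where the left-hand side is interpreted as a real power with integer exponent 2 - r. -/
/-!
Write `N = ∏ pᵃ`. Since `(p - 1) σ(pᵃ) = pᵃ⁺¹ - 1 < pᵃ⁺¹`, multiplying over the prime factors gives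
`σ(N) ∏ (p - 1) < N ∏ p`, so a perfect number satisfies `2 ∏ (p - 1) < ∏ p`. For odd `N` this forces
`ω(N) ≥ 3`, because distinct `p, q ≥ 3` satisfy `p q ≤ 2 (p - 1)(q - 1)`.
As every prime factor is at least `3`, `N ≥ 3 ^ ω(N)`, and then
`N ^ (2 - ω) ≤ N⁻¹ ≤ 3 ^ (-ω) = (1/3) (1/3) ^ (ω - 1) ≤ (1/3) (2/3) ^ (ω - 1)`.
-/

open Finset ArithmeticFunction
open scoped ArithmeticFunction.sigma

namespace Nat

theorem sub_one_mul_sigma_one_prime_pow_lt {p : ℕ} (hp : p.Prime) (a : ℕ) :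
    (p - 1) * σ 1 (p ^ a) < p ^ (a + 1) := by
  obtain ⟨q, rfl⟩ : ∃ q, p = q + 1 := ⟨p - 1, (Nat.sub_add_cancel hp.one_le).symm⟩
  rw [sigma_one_apply_prime_pow hp, Nat.add_sub_cancel, mul_comm, ← geom_sum_mul_add q (a + 1)]
  exact Nat.lt_succ_self _

theorem sigma_one_mul_prod_sub_one_lt {N : ℕ} (hN : 1 < N) :
    σ 1 N * ∏ p ∈ N.primeFactors, (p - 1) < N * ∏ p ∈ N.primeFactors, p := by
  have hN0 : N ≠ 0 := by omega
  have hσ : σ 1 N = ∏ p ∈ N.primeFactors, σ 1 (p ^ N.factorization p) := by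
    rw [isMultiplicative_sigma.multiplicative_factorization _ hN0,
      Nat.prod_factorization_eq_prod_primeFactors]
  have hNprod : N = ∏ p ∈ N.primeFactors, p ^ N.factorization p := by
    rw [← Nat.prod_factorization_eq_prod_primeFactors, Nat.prod_factorization_pow_eq_self hN0]
  calc σ 1 N * ∏ p ∈ N.primeFactors, (p - 1)
      = ∏ p ∈ N.primeFactors, (p - 1) * σ 1 (p ^ N.factorization p) := by
        rw [hσ, ← prod_mul_distrib]
        simp only [mul_comm]
    _ < ∏ p ∈ N.primeFactors, p ^ (N.factorization p + 1) := by
        refine prod_lt_prod_of_nonempty (fun p hp => ?_) (fun p hp => ?_) (nonempty_primeFactors.2 hN)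
        · have hp := prime_of_mem_primeFactors hp
          exact Nat.mul_pos (Nat.sub_pos_of_lt hp.one_lt) (sigma_pos _ _ (pow_ne_zero _ hp.ne_zero))
        · exact sub_one_mul_sigma_one_prime_pow_lt (prime_of_mem_primeFactors hp) _
    _ = N * ∏ p ∈ N.primeFactors, p := by
        simp only [pow_succ]
        rw [prod_mul_distrib, ← hNprod]

theorem Perfect.two_mul_prod_sub_one_lt {N : ℕ} (hN : N.Perfect) :
    2 * ∏ p ∈ N.primeFactors, (p - 1) < ∏ p ∈ N.primeFactors, p := by
  have hσ : σ 1 N = 2 * N := by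
    rw [sigma_one_apply, ← perfect_iff_sum_divisors_eq_two_mul hN.2]
    exact hN
  have hN1 : 1 < N := by
    by_contra h
    obtain rfl : N = 1 := by have := hN.2; omega
    simp at hσ
  have key := sigma_one_mul_prod_sub_one_lt hN1
  rw [hσ] at key
  exact Nat.lt_of_mul_lt_mul_left (by linarith)

theorem three_le_of_mem_primeFactors_of_odd {N p : ℕ} (hN : Odd N) (hp : p ∈ N.primeFactors) :
    3 ≤ p := by
  have hp2 : p ≠ 2 := by
    rintro rfl
    exact Nat.not_even_iff_odd.2 hN (even_iff_two_dvd.2 (dvd_of_mem_primeFactors hp))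
  have := (prime_of_mem_primeFactors hp).two_le
  omega

theorem three_pow_card_primeFactors_le_of_odd {N : ℕ} (hN : Odd N) :
    3 ^ N.primeFactors.card ≤ N :=
  calc 3 ^ N.primeFactors.card = ∏ _p ∈ N.primeFactors, 3 := (prod_const 3).symm
    _ ≤ ∏ p ∈ N.primeFactors, p :=
      prod_le_prod' fun _ hp => three_le_of_mem_primeFactors_of_odd hN hp
    _ ≤ N := Nat.le_of_dvd hN.pos (prod_primeFactors_dvd N)

theorem mul_le_two_mul_sub_one_mul_sub_one {p q : ℕ} (hp : 3 ≤ p) (hq : 3 ≤ q) (hpq : p ≠ q) :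
    p * q ≤ 2 * ((p - 1) * (q - 1)) := by
  obtain ⟨a, rfl⟩ : ∃ a, p = a + 3 := ⟨p - 3, by omega⟩
  obtain ⟨b, rfl⟩ : ∃ b, q = b + 3 := ⟨q - 3, by omega⟩
  simp only [show ∀ c, c + 3 - 1 = c + 2 from fun _ => rfl]
  rcases Nat.lt_or_gt_of_ne hpq with h | h <;> nlinarith

theorem Perfect.three_le_card_primeFactors_of_odd {N : ℕ} (hN : N.Perfect) (hodd : Odd N) :
    3 ≤ N.primeFactors.card := by
  have key := hN.two_mul_prod_sub_one_lt
  have h3 := fun p (hp : p ∈ N.primeFactors) => three_le_of_mem_primeFactors_of_odd hodd hp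
  by_contra! hcard
  interval_cases h : N.primeFactors.card
  · simp [Finset.card_eq_zero.1 h] at key
  · obtain ⟨p, hp⟩ := card_eq_one.1 h
    have := h3 p (by simp [hp])
    simp only [hp, prod_singleton] at key
    omega
  · obtain ⟨p, q, hpq, hs⟩ := card_eq_two.1 h
    have hp : p ∈ N.primeFactors := by simp [hs]
    have hq : q ∈ N.primeFactors := by simp [hs]
    have := mul_le_two_mul_sub_one_mul_sub_one (h3 p hp) (h3 q hq) hpq
    rw [hs, prod_pair hpq, prod_pair hpq] at key
    omega

end Nat

theorem Real.zpow_two_sub_le_of_three_pow_le {x : ℝ} {r : ℕ} (hr : 3 ≤ r) (hx : 3 ^ r ≤ x) :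
    x ^ ((2 : ℤ) - r) ≤ 1 / 3 * (2 / 3) ^ ((r : ℤ) - 1) := by
  obtain ⟨k, rfl⟩ : ∃ k, r = k + 1 := ⟨r - 1, by omega⟩
  have hx1 : 1 ≤ x := (one_le_pow₀ (by norm_num)).trans hx
  have hexp : ((k + 1 : ℕ) : ℤ) - 1 = k := by push_cast; ring
  rw [hexp, zpow_natCast]
  calc x ^ ((2 : ℤ) - (k + 1 : ℕ)) ≤ x ^ (-1 : ℤ) := zpow_le_zpow_right₀ hx1 (by omega)
    _ = x⁻¹ := zpow_neg_one x
    _ ≤ ((3 : ℝ) ^ (k + 1))⁻¹ := inv_anti₀ (by positivity) hx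
    _ = 1 / 3 * (1 / 3) ^ k := by rw [pow_succ, mul_inv, one_div, inv_pow, mul_comm]
    _ ≤ 1 / 3 * (2 / 3) ^ k := by gcongr; norm_num

theorem stmt_17 (N : ℕ) (hodd : Odd N) (hperf : N.Perfect) :
    (N : ℝ) ^ ((2 : ℤ) - (N.primeFactors.card : ℤ)) ≤
      (1 / 3 : ℝ) * (2 / 3 : ℝ) ^ ((N.primeFactors.card : ℤ) - 1) :=
  Real.zpow_two_sub_le_of_three_pow_le (hperf.three_le_card_primeFactors_of_odd hodd)
    (by exact_mod_cast Nat.three_pow_card_primeFactors_le_of_odd hodd)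
end

section
/- Let p and q be primes with 5 < p < q. Then for every prime r and every positive integer k, σ(pq)/(pq) ≠ σ(r^k)/r^k; in particular, the abundancy index σ(pq)/(pq) is not attained by any prime power. -/
/-! Since `σ(r^k) ≡ 1 [MOD r]`, the identity `σ(x) r^k = σ(r^k) x` forces `x = r^k m`. The abundancy
index strictly increases along proper multiples (`σ(nm)` counts the divisors `d m` with `d ∣ n`
and also `1`), so `m = 1`. Hence `pq = r^k`, which makes `p = r = q`. -/

open ArithmeticFunction
open scoped ArithmeticFunction.sigma

theorem sigma_one_prime_pow_eq_mul_add_one {r : ℕ} (hr : r.Prime) (k : ℕ) :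
    σ 1 (r ^ k) = r * (∑ i ∈ Finset.range k, r ^ i) + 1 := by
  rw [sigma_one_apply_prime_pow hr, Finset.sum_range_succ', Finset.mul_sum]
  simp [pow_succ']

theorem coprime_prime_pow_sigma_one {r : ℕ} (hr : r.Prime) (k : ℕ) :
    Nat.Coprime (r ^ k) (σ 1 (r ^ k)) := by
  refine Nat.Coprime.pow_left _ ?_
  rw [sigma_one_prime_pow_eq_mul_add_one hr]
  exact (Nat.coprime_mul_left_add_right r 1 _).mpr (Nat.coprime_one_right r)

theorem mul_sigma_one_lt_sigma_one_mul {n m : ℕ} (hn : n ≠ 0) (hm : 1 < m) :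
    m * σ 1 n < σ 1 (n * m) := by
  have hsub : insert 1 ((n.divisors).image (· * m)) ⊆ (n * m).divisors := by
    intro d hd
    simp only [Finset.mem_insert, Finset.mem_image, Nat.mem_divisors] at hd ⊢
    rcases hd with rfl | ⟨e, ⟨he, -⟩, rfl⟩
    · exact ⟨one_dvd _, by positivity⟩
    · exact ⟨Nat.mul_dvd_mul_right he m, by positivity⟩
  have hone : 1 ∉ (n.divisors).image (· * m) := by
    simp only [Finset.mem_image, not_exists, not_and, mul_eq_one]
    omega
  calc m * σ 1 n < 1 + ∑ d ∈ (n.divisors).image (· * m), d := by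
        rw [Finset.sum_image (fun a _ b _ h => Nat.eq_of_mul_eq_mul_right (by omega) h),
          sigma_one_apply, Finset.mul_sum]
        simp [mul_comm]
    _ = ∑ d ∈ insert 1 ((n.divisors).image (· * m)), d := by rw [Finset.sum_insert hone]
    _ ≤ σ 1 (n * m) := by rw [sigma_one_apply]; exact Finset.sum_le_sum_of_subset hsub

theorem eq_prime_pow_of_sigma_one_mul_eq {x r k : ℕ} (hx : x ≠ 0) (hr : r.Prime)
    (h : σ 1 x * r ^ k = σ 1 (r ^ k) * x) : x = r ^ k := by
  obtain ⟨m, rfl⟩ : r ^ k ∣ x :=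
    (coprime_prime_pow_sigma_one hr k).dvd_of_dvd_mul_left (Dvd.intro_left _ h)
  have hrk : r ^ k ≠ 0 := pow_ne_zero k hr.ne_zero
  have hsig : σ 1 (r ^ k * m) = m * σ 1 (r ^ k) := by
    apply Nat.eq_of_mul_eq_mul_right (Nat.pos_of_ne_zero hrk)
    rw [h]; ring
  obtain rfl : m = 1 := by
    by_contra hm1
    have hm0 : m ≠ 0 := right_ne_zero_of_mul hx
    have := mul_sigma_one_lt_sigma_one_mul hrk (m := m) (by omega)
    omega
  exact mul_one _

theorem stmt_19_general (p q : ℕ) (hp : p.Prime) (hq : q.Prime) (hpq : p < q) :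
    ∀ (r k : ℕ), r.Prime → 0 < k →
      (ArithmeticFunction.sigma 1 (p * q) : ℚ) / ((p * q : ℕ) : ℚ) ≠ (ArithmeticFunction.sigma 1 (r ^ k) : ℚ) / ((r ^ k : ℕ) : ℚ) := by
  intro r k hr _ h
  have hpq0 : p * q ≠ 0 := mul_ne_zero hp.ne_zero hq.ne_zero
  rw [div_eq_div_iff (by exact_mod_cast hpq0) (by exact_mod_cast pow_ne_zero k hr.ne_zero)] at h
  have hrk : p * q = r ^ k := eq_prime_pow_of_sigma_one_mul_eq hpq0 hr (by exact_mod_cast h)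
  have eq_r {s : ℕ} (hs : s.Prime) (hdvd : s ∣ p * q) : s = r :=
    (Nat.prime_dvd_prime_iff_eq hs hr).mp (hs.dvd_of_dvd_pow (hrk ▸ hdvd))
  exact hpq.ne ((eq_r hp (dvd_mul_right p q)).trans (eq_r hq (dvd_mul_left q p)).symm)

theorem stmt_19 (p q : ℕ) (hp : p.Prime) (hq : q.Prime) (h5 : 5 < p) (hpq : p < q) :
    ∀ (r k : ℕ), r.Prime → 0 < k →
      (ArithmeticFunction.sigma 1 (p * q) : ℚ) / ((p * q : ℕ) : ℚ) ≠ (ArithmeticFunction.sigma 1 (r ^ k) : ℚ) / ((r ^ k : ℕ) : ℚ) :=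
  stmt_19_general p q hp hq hpq
end
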